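/- arXiv:2412.00548 — 3 statements merged into one kernel-verified Lean document; each statement's English description precedes it below -/
import Mathlib

section
/- Let n ≥ 1, k ≥ 1, let A₁, …, A_k be real symmetric n×n matrices, and b ∈ ℝᵏ. Suppose λ* ∈ ℝᵏ is such that P* = Iₙ + Σᵢ λᵢ*Aᵢ is positive semidefinite, and suppose m* ∈ ℝⁿ satisfies both the constraints (1/2)m*ᵀAᵢm* = bᵢ for all i ∈ [1,k] and the stationarity condition P*m* = 0. Then m* is a global minimizer: for every m ∈ ℝⁿ with (1/2)mᵀAᵢm = bᵢ for all i, one has (1/2)‖m‖² ≥ (1/2)‖m*‖², and moreover (1/2)‖m*‖² = −λ*ᵀb. -/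
/-!
For a multiplier `λ` with `P = I + Σᵢ λᵢ Aᵢ ⪰ 0`, every feasible `m` satisfies
`0 ≤ mᵀPm = ‖m‖² + Σᵢ λᵢ mᵀAᵢm = ‖m‖² + 2 λᵀb`, so `-λᵀb` is a lower bound for the objective
(weak duality). Stationarity `Pm* = 0` makes this quadratic form vanish at the feasible `m*`,
so `m*` attains the bound.
-/

open Matrix

section

variable {n ι R : Type*} [Fintype n] [DecidableEq n] [Fintype ι]

theorem dotProduct_one_add_sum_smul_mulVec [CommRing R] (A : ι → Matrix n n R) (lam : ι → R)
    (m : n → R) :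
    m ⬝ᵥ (1 + ∑ i, lam i • A i) *ᵥ m = m ⬝ᵥ m + ∑ i, lam i * (m ⬝ᵥ A i *ᵥ m) := by
  rw [add_mulVec, dotProduct_add, one_mulVec, sum_mulVec, dotProduct_sum]
  simp only [smul_mulVec, dotProduct_smul, smul_eq_mul]

theorem dotProduct_one_add_sum_smul_mulVec_of_feasible (A : ι → Matrix n n ℝ) (b lam : ι → ℝ)
    {m : n → ℝ} (hm : ∀ i, (1 / 2) * (m ⬝ᵥ A i *ᵥ m) = b i) :
    m ⬝ᵥ (1 + ∑ i, lam i • A i) *ᵥ m = m ⬝ᵥ m + 2 * (lam ⬝ᵥ b) := by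
  rw [dotProduct_one_add_sum_smul_mulVec, dotProduct.eq_1 lam, Finset.mul_sum]
  congr 1
  refine Finset.sum_congr rfl fun i _ => ?_
  rw [← hm i]
  ring

theorem neg_dotProduct_le_of_posSemidef (A : ι → Matrix n n ℝ) (b lam : ι → ℝ)
    (hP : (1 + ∑ i, lam i • A i).PosSemidef) {m : n → ℝ}
    (hm : ∀ i, (1 / 2) * (m ⬝ᵥ A i *ᵥ m) = b i) :
    -(lam ⬝ᵥ b) ≤ (1 / 2) * (m ⬝ᵥ m) := by
  have hform := hP.dotProduct_mulVec_nonneg m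
  rw [star_trivial, dotProduct_one_add_sum_smul_mulVec_of_feasible A b lam hm] at hform
  linarith

theorem eq_neg_dotProduct_of_mulVec_eq_zero (A : ι → Matrix n n ℝ) (b lam : ι → ℝ)
    {m : n → ℝ} (hm : ∀ i, (1 / 2) * (m ⬝ᵥ A i *ᵥ m) = b i)
    (hstat : (1 + ∑ i, lam i • A i) *ᵥ m = 0) :
    (1 / 2) * (m ⬝ᵥ m) = -(lam ⬝ᵥ b) := by
  have hform := dotProduct_one_add_sum_smul_mulVec_of_feasible A b lam hm
  rw [hstat, dotProduct_zero] at hform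
  linarith

end

theorem qcqp_global_optimality_general (n k : ℕ)
    (A : Fin k → Matrix (Fin n) (Fin n) ℝ)
    (b lam : Fin k → ℝ)
    (hP : ((1 : Matrix (Fin n) (Fin n) ℝ) + ∑ i, lam i • A i).PosSemidef)
    (mstar : Fin n → ℝ)
    (hfeas : ∀ i, (1 / 2) * (mstar ⬝ᵥ (A i).mulVec mstar) = b i)
    (hstat : ((1 : Matrix (Fin n) (Fin n) ℝ) + ∑ i, lam i • A i).mulVec mstar = 0) :
    (∀ m : Fin n → ℝ, (∀ i, (1 / 2) * (m ⬝ᵥ (A i).mulVec m) = b i) →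
        (1 / 2) * (m ⬝ᵥ m) ≥ (1 / 2) * (mstar ⬝ᵥ mstar)) ∧
      (1 / 2) * (mstar ⬝ᵥ mstar) = -(lam ⬝ᵥ b) := by
  have hstar := eq_neg_dotProduct_of_mulVec_eq_zero A b lam hfeas hstat
  refine ⟨fun m hm => ?_, hstar⟩
  rw [hstar]
  exact neg_dotProduct_le_of_posSemidef A b lam hP hm

/-- Sufficient condition for global optimality in the homogeneous QCQP
`min ½‖m‖² s.t. ½mᵀAᵢm = bᵢ`: if `P* = I + Σᵢ λᵢ*Aᵢ ⪰ 0` and `m*` is feasible with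
`P*m* = 0`, then `m*` is a global minimizer and `½‖m*‖² = −λ*ᵀb`. -/
theorem qcqp_global_optimality (n k : ℕ) (hn : 1 ≤ n) (hk : 1 ≤ k)
    (A : Fin k → Matrix (Fin n) (Fin n) ℝ) (hA : ∀ i, (A i).IsSymm)
    (b lam : Fin k → ℝ)
    (hP : ((1 : Matrix (Fin n) (Fin n) ℝ) + ∑ i, lam i • A i).PosSemidef)
    (mstar : Fin n → ℝ)
    (hfeas : ∀ i, (1 / 2) * (mstar ⬝ᵥ (A i).mulVec mstar) = b i)
    (hstat : ((1 : Matrix (Fin n) (Fin n) ℝ) + ∑ i, lam i • A i).mulVec mstar = 0) :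
    (∀ m : Fin n → ℝ, (∀ i, (1 / 2) * (m ⬝ᵥ (A i).mulVec m) = b i) →
        (1 / 2) * (m ⬝ᵥ m) ≥ (1 / 2) * (mstar ⬝ᵥ mstar)) ∧
      (1 / 2) * (mstar ⬝ᵥ mstar) = -(lam ⬝ᵥ b) :=
  qcqp_global_optimality_general n k A b lam hP mstar hfeas hstat
end

section
/- Let n ≥ 1, k ≥ 1, let A₁, …, A_k be real symmetric 3n×3n matrices, and b ∈ ℝᵏ (encoding the linear constraints tr(𝔛Aᵢ) = bᵢ on the symmetric matrix variable 𝔛). Suppose P is a symmetric positive semidefinite 3n×3n matrix of the form P = I + Σᵢ λᵢAᵢ for some λ ∈ ℝᵏ, and suppose s*, c* ∈ ℝ^{3n} are such that 𝔛* = s*s*ᵀ + c*c*ᵀ satisfies tr(𝔛*Aᵢ) = bᵢ for all i and P𝔛* = 0. Then (s*, c*) globally minimizes (1/2)(‖s‖² + ‖c‖²) over all (s, c) ∈ ℝ^{3n} × ℝ^{3n} with tr((ssᵀ + ccᵀ)Aᵢ) = bᵢ for all i ∈ [1,k]. -/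
/-!
Weak duality for the SDP relaxation. For `P = 1 + ∑ λᵢ Aᵢ`, any `X` satisfying the constraints
`tr(X Aᵢ) = bᵢ` has `tr(X P) = tr X + ∑ λᵢ bᵢ`, so the objective `tr X` differs from `tr(X P)`
by a constant on the feasible set. For `X = s sᵀ + c cᵀ` and `P ⪰ 0` we get `tr(X P) ≥ 0`,
while `P X* = 0` gives `tr(X* P) = 0`, hence `tr X* ≤ tr X`.
-/

open Matrix

section

variable {m ι R : Type*} [Fintype m] [Fintype ι]

lemma Matrix.trace_vecMulVec_self_mul [CommSemiring R] (v : m → R) (M : Matrix m m R) :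
    trace (vecMulVec v v * M) = v ⬝ᵥ (M *ᵥ v) := by
  rw [trace_mul_comm, mul_vecMulVec, trace_vecMulVec, dotProduct_comm]

lemma Matrix.PosSemidef.trace_vecMulVec_self_mul_nonneg {P : Matrix m m ℝ} (hP : P.PosSemidef)
    (v : m → ℝ) : 0 ≤ trace (vecMulVec v v * P) := by
  simpa [trace_vecMulVec_self_mul] using hP.dotProduct_mulVec_nonneg v

lemma Matrix.trace_mul_one_add_sum_smul [CommRing R] [DecidableEq m] (X : Matrix m m R)
    (A : ι → Matrix m m R) (lam : ι → R) :
    trace (X * (1 + ∑ i, lam i • A i)) = trace X + ∑ i, lam i * trace (X * A i) := by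
  simp [Matrix.mul_add, Matrix.mul_sum, trace_sum]

lemma Matrix.trace_le_trace_of_trace_mul_eq_zero [CommRing R] [PartialOrder R]
    [IsOrderedRing R] [DecidableEq m] {A : ι → Matrix m m R} {lam : ι → R} {X Y : Matrix m m R}
    (hXY : ∀ i, trace (X * A i) = trace (Y * A i))
    (hX : trace (X * (1 + ∑ i, lam i • A i)) = 0)
    (hY : 0 ≤ trace (Y * (1 + ∑ i, lam i • A i))) :
    trace X ≤ trace Y := by
  rw [trace_mul_one_add_sum_smul] at hX hY
  simp only [hXY] at hX
  exact le_of_add_le_add_right (hX ▸ hY)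

end

theorem n_agent_power_optimal_general (n k : ℕ)
    (A : Fin k → Matrix (Fin (3 * n)) (Fin (3 * n)) ℝ)
    (b : Fin k → ℝ)
    (P : Matrix (Fin (3 * n)) (Fin (3 * n)) ℝ)
    (hPsd : P.PosSemidef)
    (hform : ∃ lam : Fin k → ℝ, P = 1 + ∑ i, lam i • A i)
    (sstar cstar : Fin (3 * n) → ℝ)
    (hfeas : ∀ i, Matrix.trace
      ((Matrix.vecMulVec sstar sstar + Matrix.vecMulVec cstar cstar) * A i) = b i)
    (hstat : P * (Matrix.vecMulVec sstar sstar + Matrix.vecMulVec cstar cstar) = 0) :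
    ∀ s c : Fin (3 * n) → ℝ,
      (∀ i, Matrix.trace ((Matrix.vecMulVec s s + Matrix.vecMulVec c c) * A i) = b i) →
      (1 / 2) * (sstar ⬝ᵥ sstar + cstar ⬝ᵥ cstar) ≤ (1 / 2) * (s ⬝ᵥ s + c ⬝ᵥ c) := by
  obtain ⟨lam, rfl⟩ := hform
  intro s c hf
  have hle := trace_le_trace_of_trace_mul_eq_zero (fun i ↦ (hfeas i).trans (hf i).symm)
    (by rw [trace_mul_comm, hstat, trace_zero])
    (by rw [Matrix.add_mul, trace_add]
        exact add_nonneg (hPsd.trace_vecMulVec_self_mul_nonneg s)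
          (hPsd.trace_vecMulVec_self_mul_nonneg c))
  simp only [trace_add, trace_vecMulVec] at hle
  linarith

/-- N-agent power-optimal dipole allocation (Theorem 2): if the symmetric PSD matrix
`P = I + Σᵢ λᵢAᵢ` and `𝔛* = s*s*ᵀ + c*c*ᵀ` satisfies the linear constraints
`tr(𝔛*Aᵢ) = bᵢ` and `P𝔛* = 0`, then `(s*, c*)` globally minimizes `½(‖s‖² + ‖c‖²)`
over all `(s, c)` with `tr((ssᵀ + ccᵀ)Aᵢ) = bᵢ`. -/
theorem n_agent_power_optimal (n k : ℕ) (hn : 1 ≤ n) (hk : 1 ≤ k)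
    (A : Fin k → Matrix (Fin (3 * n)) (Fin (3 * n)) ℝ) (hA : ∀ i, (A i).IsSymm)
    (b : Fin k → ℝ)
    (P : Matrix (Fin (3 * n)) (Fin (3 * n)) ℝ) (hPsymm : P.IsSymm)
    (hPsd : P.PosSemidef)
    (hform : ∃ lam : Fin k → ℝ, P = 1 + ∑ i, lam i • A i)
    (sstar cstar : Fin (3 * n) → ℝ)
    (hfeas : ∀ i, Matrix.trace
      ((Matrix.vecMulVec sstar sstar + Matrix.vecMulVec cstar cstar) * A i) = b i)
    (hstat : P * (Matrix.vecMulVec sstar sstar + Matrix.vecMulVec cstar cstar) = 0) :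
    ∀ s c : Fin (3 * n) → ℝ,
      (∀ i, Matrix.trace ((Matrix.vecMulVec s s + Matrix.vecMulVec c c) * A i) = b i) →
      (1 / 2) * (sstar ⬝ᵥ sstar + cstar ⬝ᵥ cstar) ≤ (1 / 2) * (s ⬝ᵥ s + c ⬝ᵥ c) :=
  n_agent_power_optimal_general n k A b P hPsd hform sstar cstar hfeas hstat
end

section
/- Let d > 0 and let Q_d ∈ ℝ^{6×9} be the matrix (1/d⁴)·[row₁ = (−6,0,0,0,3,0,0,0,3); row₂ = (0,3,0,3,0,0,0,0,0); row₃ = (0,0,3,0,0,0,3,0,0); row₄ = d·(0,0,0,0,0,1,0,−1,0); row₅ = d·(0,0,2,0,0,0,1,0,0); row₆ = d·(0,−2,0,−1,0,0,0,0,0)]. Let μ₁, μ₂, μ₃, θ₂, θ₃ ∈ ℝ and set s₀ = (μ₁, μ₂cosθ₂, μ₃cosθ₃) ∈ ℝ³ and c₀ = (0, μ₂sinθ₂, μ₃sinθ₃) ∈ ℝ³. If μ₁μ₂μ₃ sin(θ₂ − θ₃) ≠ 0, then the 6×6 matrix Q_d·([s₀, c₀] ⊗ I₃) is invertible, where [s₀,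 c₀] ∈ ℝ^{3×2} has columns s₀, c₀ and ⊗ is the Kronecker product of matrices. -/
open Matrix Kronecker

/-- The far-field coefficient matrix `Q_d ∈ ℝ^{6×9}` in the line-of-sight frame, with
columns indexed by `Fin 3 × Fin 3` (pair `(a, b)` standing for linear index `3a + b`
of the Kronecker/vec ordering). -/
noncomputable def Qd (d : ℝ) : Matrix (Fin 6) (Fin 3 × Fin 3) ℝ :=
  Matrix.of fun i p =>
    (1 / d ^ 4) *
      (![![![-6, 0, 0], ![0, 3, 0], ![0, 0, 3]],
         ![![0, 3, 0], ![3, 0, 0], ![0, 0, 0]],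
         ![![0, 0, 3], ![0, 0, 0], ![3, 0, 0]],
         ![![0, 0, 0], ![0, 0, d], ![0, -d, 0]],
         ![![0, 0, 2 * d], ![0, 0, 0], ![d, 0, 0]],
         ![![0, -2 * d, 0], ![-d, 0, 0], ![0, 0, 0]]] i p.1 p.2)

/-! Column `(k, j)` of `Q_d ([s₀, c₀] ⊗ I₃)` is `∑ₐ Q_d(·, (a, j)) [s₀, c₀]ₐₖ`, so the matrix is
`d⁻⁴` times an explicit matrix in `μ₁` and `a = μ₂ cos θ₂, b = μ₃ cos θ₃, p = μ₂ sin θ₂,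
q = μ₃ sin θ₃`, with determinant `27 d³ μ₁² (a q − b p)(p² + q²)`. Here
`a q − b p = −μ₂ μ₃ sin (θ₂ − θ₃)`, and `p = q = 0` would force `a q − b p = 0`, so the hypothesis
makes every factor nonzero. -/

theorem mul_reindex_kronecker_one_apply {R m n k p l : Type*} [CommSemiring R] [Fintype n]
    [Fintype p] [DecidableEq p] (T : Matrix m (n × p) R) (S : Matrix n k R) (e : k × p ≃ l)
    (i : m) (c : k) (j : p) :
    (T * reindex (Equiv.refl _) e (S ⊗ₖ (1 : Matrix p p R))) i (e (c, j)) =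
      ∑ a, T i (a, j) * S a c := by
  simp [mul_apply, one_apply, Fintype.sum_prod_type]

/-- `Q_d ([s₀, c₀] ⊗ I₃)` scaled by `d⁴`, for `s₀ = (μ₁, a, b)` and `c₀ = (0, p, q)`. -/
def allocationMatrix (d μ₁ a b p q : ℝ) : Matrix (Fin 6) (Fin 6) ℝ :=
  !![-6 * μ₁, 3 * a, 3 * b, 0, 3 * p, 3 * q;
     3 * a, 3 * μ₁, 0, 3 * p, 0, 0;
     3 * b, 0, 3 * μ₁, 3 * q, 0, 0;
     0, -(d * b), d * a, 0, -(d * q), d * p;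
     d * b, 0, 2 * d * μ₁, d * q, 0, 0;
     -(d * a), -(2 * d * μ₁), 0, -(d * p), 0, 0]

theorem Qd_mul_reindex_kronecker_one (d μ₁ a b p q : ℝ) :
    Qd d * reindex (Equiv.refl (Fin 3 × Fin 3))
        ((finProdFinEquiv : Fin 2 × Fin 3 ≃ Fin (2 * 3)).trans
          (finCongr (by norm_num : 2 * 3 = 6)))
        ((of fun i j => ![![μ₁, a, b] i, ![0, p, q] i] j : Matrix (Fin 3) (Fin 2) ℝ) ⊗ₖ
          (1 : Matrix (Fin 3) (Fin 3) ℝ)) =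
      (1 / d ^ 4) • allocationMatrix d μ₁ a b p q := by
  set e : Fin 2 × Fin 3 ≃ Fin 6 := finProdFinEquiv.trans (finCongr (by norm_num))
  have he : ∀ c j, e (c, j) = ![![0, 1, 2], ![3, 4, 5]] c j := by decide
  ext i n
  obtain ⟨⟨c, j⟩, rfl⟩ := e.surjective n
  rw [mul_reindex_kronecker_one_apply, Matrix.smul_apply, he]
  fin_cases i <;> fin_cases c <;> fin_cases j <;>
    simp [Qd, allocationMatrix, Fin.sum_univ_three] <;> ring

theorem det_allocationMatrix (d μ₁ a b p q : ℝ) :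
    (allocationMatrix d μ₁ a b p q).det =
      27 * d ^ 3 * μ₁ ^ 2 * (a * q - b * p) * (p ^ 2 + q ^ 2) := by
  simp [allocationMatrix, det_succ_row_zero, Fin.sum_univ_succ, Fin.succAbove]
  ring

theorem sq_add_sq_ne_zero_of_mul_sub_mul_ne_zero {R : Type*} [CommRing R] [LinearOrder R]
    [IsStrictOrderedRing R] {a b p q : R} (h : a * q - b * p ≠ 0) : p ^ 2 + q ^ 2 ≠ 0 := by
  contrapose! h
  obtain ⟨hp, hq⟩ := (add_eq_zero_iff_of_nonneg (sq_nonneg p) (sq_nonneg q)).mp h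
  simp [pow_eq_zero_iff two_ne_zero |>.mp hp, pow_eq_zero_iff two_ne_zero |>.mp hq]

/-- Nonsingularity of the decentralized two-agent dipole allocation: if
`μ₁μ₂μ₃ sin(θ₂ − θ₃) ≠ 0`, then `Q_d·([s₀, c₀] ⊗ I₃)` is invertible, where
`s₀ = (μ₁, μ₂cosθ₂, μ₃cosθ₃)`, `c₀ = (0, μ₂sinθ₂, μ₃sinθ₃)` are the columns of the
3×2 matrix `[s₀, c₀]` and `⊗` is the Kronecker product of matrices. -/
theorem decentralized_allocation_invertible (d : ℝ) (hd : 0 < d)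
    (μ₁ μ₂ μ₃ θ₂ θ₃ : ℝ) (h : μ₁ * μ₂ * μ₃ * Real.sin (θ₂ - θ₃) ≠ 0) :
    IsUnit (Qd d *
      (Matrix.reindex (Equiv.refl (Fin 3 × Fin 3))
        ((finProdFinEquiv : Fin 2 × Fin 3 ≃ Fin (2 * 3)).trans
          (finCongr (by norm_num : 2 * 3 = 6)))
        ((Matrix.of fun i j =>
            ![![μ₁, μ₂ * Real.cos θ₂, μ₃ * Real.cos θ₃] i,
              ![0, μ₂ * Real.sin θ₂, μ₃ * Real.sin θ₃] i] j :
            Matrix (Fin 3) (Fin 2) ℝ) ⊗ₖ (1 : Matrix (Fin 3) (Fin 3) ℝ)))).det := by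
  rw [show μ₁ * μ₂ * μ₃ * Real.sin (θ₂ - θ₃) = μ₁ * (μ₂ * μ₃ * Real.sin (θ₂ - θ₃)) by ring,
    mul_ne_zero_iff] at h
  obtain ⟨hμ₁, hsin⟩ := h
  have hcross : μ₂ * Real.cos θ₂ * (μ₃ * Real.sin θ₃) - μ₃ * Real.cos θ₃ * (μ₂ * Real.sin θ₂) =
      -(μ₂ * μ₃ * Real.sin (θ₂ - θ₃)) := by
    rw [Real.sin_sub]
    ring
  have hcross_ne := hcross ▸ neg_ne_zero.mpr hsin
  rw [Qd_mul_reindex_kronecker_one, det_smul, det_allocationMatrix, isUnit_iff_ne_zero]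
  simp [hd.ne', hμ₁, hcross_ne, sq_add_sq_ne_zero_of_mul_sub_mul_ne_zero hcross_ne]
end
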